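/- arXiv:1808.09404 — 2 statements merged into one kernel-verified Lean document; each statement's English description precedes it below -/
import Mathlib

section
/- Let ν be a weight satisfying property (U) (so there is C_ν with |f'(z)| ≤ C_ν ‖f‖_{H^∞_ν}/(ν(z)(1−|z|²)) for all f ∈ H^∞_ν) and let μ be a quasi-normal weight (meaning H^∞_μ = B^∞_ω with equivalent norms, where ω(z) = (1−|z|²)μ(z)). Then S_g : H^∞_ν → H^∞_μ is bounded if and only if sup_{z∈𝔻} (μ(z)/ν(z)) |g(z)| < ∞. -/
/-!
Since `S_g f (0) = 0` and `(S_g f)' = f' g`, quasi-normality of `μ` turns boundedness of `S_g`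
into the estimate `ω |f' g| ≲ ‖f‖_ν` with `ω = (1 - |z|²) μ`; sufficiency of the condition on `g`
is then exactly the derivative estimate (U).

For necessity one tests on monomials. Applying (U) to `z ^ n` at a point where `ν(z) |z| ^ n`
exceeds half its supremum shows that this point has modulus at least `1 - 2 C_ν / n`, so
`‖z ^ n‖_ν ≤ ν(1 - 2 C_ν / n)`. For `|a| ≥ 1/2` and `n ≈ 2 C_ν / (1 - |a|)` this norm is at
most `ν(a)` while `(1 - |a|²) n |a| ^ (n - 1) ≥ 2 C_ν e^(-4 C_ν)`, which gives
`μ(a) |g(a)| ≲ ν(a)`; the disc `|a| ≤ 1/2` is covered by the test function `z`.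
-/

open Complex Metric Set Filter Real MeasureTheory intervalIntegral

noncomputable section

def IsWeight (ν : ℂ → ℝ) : Prop :=
  ContinuousOn ν (Metric.ball (0:ℂ) 1) ∧
  (∀ z ∈ Metric.ball (0:ℂ) 1, 0 ≤ ν z) ∧
  (∀ z : ℂ, ν z = ν ((‖z‖ : ℝ) : ℂ)) ∧
  (∀ r s : ℝ, 0 ≤ r → r ≤ s → s < 1 → ν ((s:ℝ) : ℂ) ≤ ν ((r:ℝ) : ℂ))

def Sg (g f : ℂ → ℂ) (z : ℂ) : ℂ :=
  z * ∫ t in (0:ℝ)..1, deriv f ((t:ℂ) * z) * g ((t:ℂ) * z)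

theorem Sg_eqOn_sub_of_hasDerivAt {f g F : ℂ → ℂ} (hf : DifferentiableOn ℂ f (ball 0 1))
    (hg : DifferentiableOn ℂ g (ball 0 1))
    (hF : ∀ w ∈ ball (0 : ℂ) 1, HasDerivAt F (deriv f w * g w) w) :
    EqOn (Sg g f) (fun z => F z - F 0) (ball 0 1) := by
  intro z hz
  have hseg : ∀ t ∈ Icc (0 : ℝ) 1, (0 : ℂ) + t • z ∈ ball (0 : ℂ) 1 := fun t ht => by
    rw [zero_add]
    exact (convex_ball (0 : ℂ) 1).smul_mem_of_zero_mem (mem_ball_self one_pos) hz ht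
  have hcont : ContinuousOn (fun w => deriv f w * g w) (ball 0 1) :=
    ((hf.deriv isOpen_ball).mul hg).continuousOn
  have h := integral_unitInterval_deriv_eq_sub (f := F) (f' := fun w => deriv f w * g w)
    (hcont.comp (f := fun t : ℝ => (0 : ℂ) + t • z) (by fun_prop) hseg)
    (fun t ht => hF _ (hseg t ht))
  simp only [zero_add, Complex.real_smul, smul_eq_mul] at h
  exact h

theorem hasDerivAt_Sg {f g : ℂ → ℂ} (hf : DifferentiableOn ℂ f (ball 0 1))
    (hg : DifferentiableOn ℂ g (ball 0 1)) {z : ℂ} (hz : z ∈ ball (0 : ℂ) 1) :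
    HasDerivAt (Sg g f) (deriv f z * g z) z := by
  obtain ⟨F, hF⟩ := ((hf.deriv isOpen_ball).mul hg).isExactOn_ball
  refine ((hF z hz).sub_const (F 0)).congr_of_eventuallyEq ?_
  exact (Sg_eqOn_sub_of_hasDerivAt hf hg hF).eventuallyEq_of_mem (isOpen_ball.mem_nhds hz)

theorem differentiableOn_Sg {f g : ℂ → ℂ} (hf : DifferentiableOn ℂ f (ball 0 1))
    (hg : DifferentiableOn ℂ g (ball 0 1)) : DifferentiableOn ℂ (Sg g f) (ball 0 1) :=
  fun _ hz => (hasDerivAt_Sg hf hg hz).differentiableAt.differentiableWithinAt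

@[simp] theorem Sg_zero (f g : ℂ → ℂ) : Sg g f 0 = 0 := by simp [Sg]

theorem IsWeight.apply_le_of_norm_le {ν : ℂ → ℝ} (hν : IsWeight ν) {z w : ℂ}
    (hzw : ‖z‖ ≤ ‖w‖) (hw : ‖w‖ < 1) : ν w ≤ ν z := by
  rw [hν.2.2.1 w, hν.2.2.1 z]
  exact hν.2.2.2 _ _ (norm_nonneg z) hzw hw

theorem IsWeight.mul_norm_pow_le {ν : ℂ → ℝ} (hν : IsWeight ν) (n : ℕ) {z : ℂ}
    (hz : z ∈ ball (0 : ℂ) 1) : ν z * ‖z‖ ^ n ≤ ν 0 := by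
  have hz1 : ‖z‖ < 1 := mem_ball_zero_iff.mp hz
  have hνz : ν z ≤ ν 0 := hν.apply_le_of_norm_le (by simp) hz1
  calc ν z * ‖z‖ ^ n ≤ ν 0 * 1 :=
        mul_le_mul hνz (pow_le_one₀ (norm_nonneg z) hz1.le) (by positivity)
          ((hν.2.1 z hz).trans hνz)
    _ = ν 0 := mul_one _

def HasDerivEstimate (ν : ℂ → ℝ) (Cν : ℝ) : Prop :=
  ∀ f : ℂ → ℂ, DifferentiableOn ℂ f (ball 0 1) →
    ∀ C : ℝ, (∀ z ∈ ball (0 : ℂ) 1, ν z * ‖f z‖ ≤ C) →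
    ∀ z ∈ ball (0 : ℂ) 1, ‖deriv f z‖ ≤ Cν * C / (ν z * (1 - ‖z‖ ^ 2))

theorem HasDerivEstimate.le_norm_of_lt_two_mul {ν : ℂ → ℝ} {Cν : ℝ}
    (hU : HasDerivEstimate ν Cν) (hCν : 0 < Cν) {n : ℕ} {A t : ℝ}
    (hA : ∀ z ∈ ball (0 : ℂ) 1, ν z * ‖z‖ ^ n ≤ A) (hnt : 2 * Cν ≤ n * (1 - t))
    {w : ℂ} (hw : w ∈ ball (0 : ℂ) 1) (hwA : A < 2 * (ν w * ‖w‖ ^ n)) : t ≤ ‖w‖ := by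
  set a := ‖w‖
  have ha1 : a < 1 := mem_ball_zero_iff.mp hw
  obtain ⟨m, rfl⟩ : ∃ m, n = m + 1 := Nat.exists_eq_succ_of_ne_zero <| by
    rintro rfl; norm_num at hnt; linarith
  have hA0 : 0 ≤ A := by simpa using hA 0 (mem_ball_self one_pos)
  have hνa : 0 < ν w * a ^ m * a := by rw [mul_assoc, ← pow_succ]; linarith
  have hνw : 0 < ν w := pos_of_mul_pos_left (pos_of_mul_pos_left hνa (norm_nonneg w))
    (pow_nonneg (norm_nonneg w) m)
  have hD : 0 < ν w * (1 - a ^ 2) := mul_pos hνw (by nlinarith [norm_nonneg w])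
  have hder := hU (· ^ (m + 1)) (differentiable_pow _).differentiableOn A
    (fun z hz => by simpa only [norm_pow] using hA z hz) w hw
  rw [deriv_pow_field, norm_mul, norm_pow, Complex.norm_natCast, Nat.add_sub_cancel,
    le_div_iff₀ hD] at hder
  have hkey : ((m + 1 : ℕ) : ℝ) * (1 - a ^ 2) ≤ 2 * Cν * a := by
    refine le_of_mul_le_mul_right ?_ hνa
    calc ((m + 1 : ℕ) : ℝ) * (1 - a ^ 2) * (ν w * a ^ m * a)
        = a * (((m + 1 : ℕ) : ℝ) * a ^ m * (ν w * (1 - a ^ 2))) := by ring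
      _ ≤ a * (Cν * A) := mul_le_mul_of_nonneg_left hder (norm_nonneg w)
      _ ≤ a * (Cν * (2 * (ν w * a ^ (m + 1)))) := by gcongr
      _ = 2 * Cν * a * (ν w * a ^ m * a) := by ring
  have hlt : ((m + 1 : ℕ) : ℝ) * (1 - a) < (m + 1 : ℕ) * (1 - t) :=
    calc ((m + 1 : ℕ) : ℝ) * (1 - a) ≤ (m + 1 : ℕ) * (1 - a ^ 2) := by
          gcongr; nlinarith [norm_nonneg w]
      _ ≤ 2 * Cν * a := hkey
      _ < 2 * Cν := mul_lt_of_lt_one_right (by positivity) ha1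
      _ ≤ (m + 1 : ℕ) * (1 - t) := hnt
  linarith [lt_of_mul_lt_mul_left hlt (Nat.cast_nonneg _)]

theorem HasDerivEstimate.weighted_norm_pow_le {ν : ℂ → ℝ} {Cν : ℝ} (hν : IsWeight ν)
    (hU : HasDerivEstimate ν Cν) (hCν : 0 < Cν) {n : ℕ} {t : ℝ} (ht : 0 ≤ t)
    (hnt : 2 * Cν ≤ n * (1 - t)) :
    ∀ z ∈ ball (0 : ℂ) 1, ν z * ‖z‖ ^ n ≤ ν t := by
  set S := (fun z : ℂ => ν z * ‖z‖ ^ n) '' ball 0 1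
  have hbdd : BddAbove S := ⟨ν 0, by rintro _ ⟨z, hz, rfl⟩; exact hν.mul_norm_pow_le n hz⟩
  have hle : ∀ z ∈ ball (0 : ℂ) 1, ν z * ‖z‖ ^ n ≤ sSup S :=
    fun z hz => le_csSup hbdd (mem_image_of_mem _ hz)
  -- by (U), points where `ν z * ‖z‖ ^ n` exceeds half the supremum have modulus `≥ t`
  have hsup : sSup S ≤ max (sSup S / 2) (ν t) := by
    refine csSup_le ((nonempty_ball.mpr one_pos).image _) ?_
    rintro _ ⟨w, hw, rfl⟩
    rcases le_or_gt (ν w * ‖w‖ ^ n) (sSup S / 2) with h | h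
    · exact le_max_of_le_left h
    · refine le_max_of_le_right ?_
      have hw1 : ‖w‖ < 1 := mem_ball_zero_iff.mp hw
      have htw : ‖(t : ℂ)‖ ≤ ‖w‖ := by
        rw [Complex.norm_of_nonneg ht]
        exact hU.le_norm_of_lt_two_mul hCν hle hnt hw (by linarith)
      calc ν w * ‖w‖ ^ n ≤ ν w * 1 :=
            mul_le_mul_of_nonneg_left (pow_le_one₀ (norm_nonneg w) hw1.le) (hν.2.1 w hw)
        _ ≤ ν t := by rw [mul_one]; exact hν.apply_le_of_norm_le htw hw1
  have ht1 : t < 1 := by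
    by_contra! h
    nlinarith [mul_nonneg (Nat.cast_nonneg n) (sub_nonneg.mpr h)]
  have hνt : 0 ≤ ν t := hν.2.1 _ (by rwa [mem_ball_zero_iff, Complex.norm_of_nonneg ht])
  intro z hz
  refine (hle z hz).trans ?_
  rcases le_max_iff.mp hsup with h | h <;> linarith

theorem exp_neg_two_mul_one_sub_le {s : ℝ} (hs : 1 / 2 ≤ s) (hs1 : s ≤ 1) :
    Real.exp (-(2 * (1 - s))) ≤ s := by
  have hs0 : 0 < s := by linarith
  calc Real.exp (-(2 * (1 - s))) ≤ Real.exp (log s) := by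
        refine Real.exp_le_exp.mpr (le_trans ?_ (one_sub_inv_le_log_of_pos hs0))
        have hinv : s⁻¹ ≤ 2 := inv_le_of_inv_le₀ two_pos (by linarith)
        have hdiff : 1 - s⁻¹ = -((1 - s) * s⁻¹) := by field_simp; ring
        rw [hdiff, neg_le_neg_iff, mul_comm 2]
        exact mul_le_mul_of_nonneg_left hinv (by linarith)
    _ = s := Real.exp_log hs0

theorem exists_nat_le_mul_one_sub_and_le_pow {c s : ℝ} (hc : 0 < c) (hs : 1 / 2 ≤ s)
    (hs1 : s < 1) :
    ∃ n : ℕ, c ≤ n * (1 - s) ∧ c * Real.exp (-(2 * c)) ≤ (1 - s ^ 2) * n * s ^ (n - 1) := by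
  have h1s : 0 < 1 - s := by linarith
  set n := ⌈c / (1 - s)⌉₊
  have hcn : c ≤ n * (1 - s) := (div_le_iff₀ h1s).mp (Nat.le_ceil _)
  have hn : 1 ≤ n := Nat.one_le_iff_ne_zero.mpr fun h => by
    rw [h, Nat.cast_zero, zero_mul] at hcn; linarith
  have hpred : ((n - 1 : ℕ) : ℝ) * (1 - s) ≤ c := by
    rw [Nat.cast_sub hn, Nat.cast_one]
    have hlt : (n : ℝ) - 1 < c / (1 - s) := by
      linarith [Nat.ceil_lt_add_one (div_pos hc h1s).le]
    exact ((lt_div_iff₀ h1s).mp hlt).le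
  have hpow : Real.exp (-(2 * c)) ≤ s ^ (n - 1) :=
    calc Real.exp (-(2 * c)) ≤ Real.exp ((n - 1 : ℕ) * -(2 * (1 - s))) :=
          Real.exp_le_exp.mpr (by linarith)
      _ = Real.exp (-(2 * (1 - s))) ^ (n - 1) := Real.exp_nat_mul _ _
      _ ≤ s ^ (n - 1) :=
          pow_le_pow_left₀ (Real.exp_nonneg _) (exp_neg_two_mul_one_sub_le hs hs1.le) _
  refine ⟨n, hcn, mul_le_mul ?_ hpow (Real.exp_nonneg _) (by nlinarith)⟩
  nlinarith

-- As `(S_g f)' = f' g`, this says `S_g : H^∞_ν → B^∞_ω` is bounded, `ω = (1 - |z|²) μ`.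
def HasWeightedDerivMulBound (ν μ : ℂ → ℝ) (g : ℂ → ℂ) (L : ℝ) : Prop :=
  ∀ f : ℂ → ℂ, DifferentiableOn ℂ f (ball 0 1) →
    ∀ C : ℝ, (∀ z ∈ ball (0 : ℂ) 1, ν z * ‖f z‖ ≤ C) →
    ∀ a ∈ ball (0 : ℂ) 1, (1 - ‖a‖ ^ 2) * μ a * ‖deriv f a * g a‖ ≤ L * C

section Necessity

variable {ν μ : ℂ → ℝ} {g : ℂ → ℂ} {L : ℝ}

theorem HasWeightedDerivMulBound.apply_pow (hS : HasWeightedDerivMulBound ν μ g L) {n : ℕ}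
    {C : ℝ} (hC : ∀ z ∈ ball (0 : ℂ) 1, ν z * ‖z‖ ^ n ≤ C) {a : ℂ} (ha : a ∈ ball (0 : ℂ) 1) :
    (1 - ‖a‖ ^ 2) * n * ‖a‖ ^ (n - 1) * (μ a * ‖g a‖) ≤ L * C := by
  have h := hS (· ^ n) (differentiable_pow n).differentiableOn C
    (fun z hz => by simpa only [norm_pow] using hC z hz) a ha
  rw [deriv_pow_field, norm_mul, norm_mul, norm_pow, Complex.norm_natCast] at h
  linarith

theorem HasWeightedDerivMulBound.weighted_norm_le_of_norm_le_half
    (hS : HasWeightedDerivMulBound ν μ g L) (hν : IsWeight ν)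
    (hνpos : ∀ z ∈ ball (0 : ℂ) 1, 0 < ν z) (hμ : ∀ z ∈ ball (0 : ℂ) 1, 0 ≤ μ z)
    {a : ℂ} (ha : ‖a‖ ≤ 1 / 2) :
    μ a / ν a * ‖g a‖ ≤ 4 / 3 * L * ν 0 / ν (1 / 2 : ℝ) := by
  have ha1 : a ∈ ball (0 : ℂ) 1 := mem_ball_zero_iff.mpr (by linarith)
  have hhalf : ((1 / 2 : ℝ) : ℂ) ∈ ball (0 : ℂ) 1 := by
    rw [mem_ball_zero_iff, Complex.norm_of_nonneg (by norm_num)]; norm_num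
  have hνhalf : 0 < ν (1 / 2 : ℝ) := hνpos _ hhalf
  have hνa : ν (1 / 2 : ℝ) ≤ ν a :=
    hν.apply_le_of_norm_le (by rwa [Complex.norm_of_nonneg (by norm_num)])
      (mem_ball_zero_iff.mp hhalf)
  have hμg : 0 ≤ μ a * ‖g a‖ := mul_nonneg (hμ a ha1) (norm_nonneg _)
  have h := hS.apply_pow (n := 1) (fun z hz => hν.mul_norm_pow_le 1 hz) ha1
  have h34 : 3 / 4 ≤ 1 - ‖a‖ ^ 2 := by nlinarith [norm_nonneg a]
  simp only [Nat.cast_one, mul_one, Nat.sub_self, pow_zero] at h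
  rw [div_mul_eq_mul_div]
  calc μ a * ‖g a‖ / ν a ≤ μ a * ‖g a‖ / ν (1 / 2 : ℝ) :=
        div_le_div_of_nonneg_left hμg hνhalf hνa
    _ ≤ 4 / 3 * L * ν 0 / ν (1 / 2 : ℝ) :=
        div_le_div_of_nonneg_right (by nlinarith) hνhalf.le

theorem HasWeightedDerivMulBound.weighted_norm_le_of_half_le_norm {Cν : ℝ}
    (hS : HasWeightedDerivMulBound ν μ g L) (hν : IsWeight ν)
    (hνpos : ∀ z ∈ ball (0 : ℂ) 1, 0 < ν z) (hμ : ∀ z ∈ ball (0 : ℂ) 1, 0 ≤ μ z)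
    (hU : HasDerivEstimate ν Cν) (hCν : 0 < Cν) {a : ℂ} (ha : a ∈ ball (0 : ℂ) 1)
    (ha2 : 1 / 2 ≤ ‖a‖) :
    μ a / ν a * ‖g a‖ ≤ L * Real.exp (4 * Cν) / (2 * Cν) := by
  obtain ⟨n, hn, hpow⟩ := exists_nat_le_mul_one_sub_and_le_pow (c := 2 * Cν) (by positivity)
    ha2 (mem_ball_zero_iff.mp ha)
  have hC : ∀ z ∈ ball (0 : ℂ) 1, ν z * ‖z‖ ^ n ≤ ν a := by
    rw [hν.2.2.1 a]; exact hU.weighted_norm_pow_le hν hCν (norm_nonneg a) hn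
  have hμg : 0 ≤ μ a * ‖g a‖ := mul_nonneg (hμ a ha) (norm_nonneg _)
  have h : 2 * Cν * Real.exp (-(4 * Cν)) * (μ a * ‖g a‖) ≤ L * ν a := by
    rw [show 4 * Cν = 2 * (2 * Cν) by ring]
    exact (mul_le_mul_of_nonneg_right hpow hμg).trans (hS.apply_pow hC ha)
  rw [div_mul_eq_mul_div, div_le_div_iff₀ (hνpos a ha) (by positivity)]
  calc μ a * ‖g a‖ * (2 * Cν)
      = Real.exp (4 * Cν) * (2 * Cν * Real.exp (-(4 * Cν)) * (μ a * ‖g a‖)) := by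
        rw [Real.exp_neg]; field_simp
    _ ≤ Real.exp (4 * Cν) * (L * ν a) := by gcongr
    _ = L * Real.exp (4 * Cν) * ν a := by ring

theorem HasWeightedDerivMulBound.exists_weighted_bound {Cν : ℝ}
    (hS : HasWeightedDerivMulBound ν μ g L) (hν : IsWeight ν)
    (hνpos : ∀ z ∈ ball (0 : ℂ) 1, 0 < ν z) (hμ : ∀ z ∈ ball (0 : ℂ) 1, 0 ≤ μ z)
    (hU : HasDerivEstimate ν Cν) (hCν : 0 < Cν) :
    ∃ M : ℝ, ∀ a ∈ ball (0 : ℂ) 1, μ a / ν a * ‖g a‖ ≤ M := by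
  refine ⟨max (4 / 3 * L * ν 0 / ν (1 / 2 : ℝ)) (L * Real.exp (4 * Cν) / (2 * Cν)),
    fun a ha => ?_⟩
  rcases le_total ‖a‖ (1 / 2) with ha2 | ha2
  · exact le_max_of_le_left (hS.weighted_norm_le_of_norm_le_half hν hνpos hμ ha2)
  · exact le_max_of_le_right (hS.weighted_norm_le_of_half_le_norm hν hνpos hμ hU hCν ha ha2)

end Necessity

theorem weighted_norm_Sg_le {ν μ : ℂ → ℝ} {g f : ℂ → ℂ} {Cν K M C : ℝ}
    (hνpos : ∀ z ∈ ball (0 : ℂ) 1, 0 < ν z) (hμ : ∀ z ∈ ball (0 : ℂ) 1, 0 ≤ μ z)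
    (hg : DifferentiableOn ℂ g (ball 0 1)) (hU : HasDerivEstimate ν Cν) (hCν : 0 ≤ Cν)
    (hqn : ∀ f : ℂ → ℂ, DifferentiableOn ℂ f (ball 0 1) → ∀ C : ℝ,
      (‖f 0‖ ≤ C ∧ ∀ z ∈ ball (0 : ℂ) 1, (1 - ‖z‖ ^ 2) * μ z * ‖deriv f z‖ ≤ C) →
      ∀ z ∈ ball (0 : ℂ) 1, μ z * ‖f z‖ ≤ K * C)
    (hM : ∀ z ∈ ball (0 : ℂ) 1, μ z / ν z * ‖g z‖ ≤ M)
    (hf : DifferentiableOn ℂ f (ball 0 1)) (hC : ∀ z ∈ ball (0 : ℂ) 1, ν z * ‖f z‖ ≤ C) :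
    ∀ z ∈ ball (0 : ℂ) 1, μ z * ‖Sg g f z‖ ≤ K * (Cν * M * C) := by
  have h0 : (0 : ℂ) ∈ ball (0 : ℂ) 1 := mem_ball_self one_pos
  have hC0 : 0 ≤ C := (mul_nonneg (hνpos 0 h0).le (norm_nonneg _)).trans (hC 0 h0)
  have hM0 : 0 ≤ M :=
    (mul_nonneg (div_nonneg (hμ 0 h0) (hνpos 0 h0).le) (norm_nonneg _)).trans (hM 0 h0)
  refine hqn _ (differentiableOn_Sg hf hg) _
    ⟨by rw [Sg_zero, norm_zero]; positivity, fun w hw => ?_⟩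
  have hw2 : 0 < 1 - ‖w‖ ^ 2 := by nlinarith [norm_nonneg w, mem_ball_zero_iff.mp hw]
  rw [(hasDerivAt_Sg hf hg hw).deriv, norm_mul]
  calc (1 - ‖w‖ ^ 2) * μ w * (‖deriv f w‖ * ‖g w‖)
      ≤ (1 - ‖w‖ ^ 2) * μ w * (Cν * C / (ν w * (1 - ‖w‖ ^ 2)) * ‖g w‖) := by
        gcongr
        · exact mul_nonneg hw2.le (hμ w hw)
        · exact hU f hf C hC w hw
    _ = Cν * C * (μ w / ν w * ‖g w‖) := by
        field_simp [(hνpos w hw).ne', hw2.ne']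
    _ ≤ Cν * C * M := by gcongr; exact hM w hw
    _ = Cν * M * C := by ring

/-- If `ν` satisfies property (U) and `μ` is quasi-normal (`H^∞_μ = B^∞_ω` with equivalent
norms, `ω(z) = (1-|z|²)μ(z)`), then `S_g : H^∞_ν → H^∞_μ` is bounded iff
`sup_z (μ(z)/ν(z))|g(z)| < ∞`. -/
theorem stmt9 (ν μ : ℂ → ℝ) (g : ℂ → ℂ)
    (hν : IsWeight ν) (hμ : IsWeight μ)
    (hνpos : ∀ z ∈ Metric.ball (0:ℂ) 1, 0 < ν z)
    (hg : DifferentiableOn ℂ g (Metric.ball (0:ℂ) 1))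
    -- property (U) for ν, via the derivative estimate:
    (hU : ∃ Cν : ℝ, 0 < Cν ∧ ∀ f : ℂ → ℂ, DifferentiableOn ℂ f (Metric.ball (0:ℂ) 1) →
      ∀ C : ℝ, (∀ z ∈ Metric.ball (0:ℂ) 1, ν z * ‖f z‖ ≤ C) →
      ∀ z ∈ Metric.ball (0:ℂ) 1,
        ‖deriv f z‖ ≤ Cν * C / (ν z * (1 - ‖z‖ ^ 2)))
    -- μ quasi-normal: the H^∞_μ norm and the B^∞_ω norm are equivalent:
    (hqn : ∃ K : ℝ, 0 < K ∧
      (∀ f : ℂ → ℂ, DifferentiableOn ℂ f (Metric.ball (0:ℂ) 1) → ∀ C : ℝ,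
        (∀ z ∈ Metric.ball (0:ℂ) 1, μ z * ‖f z‖ ≤ C) →
        ∀ z ∈ Metric.ball (0:ℂ) 1,
          (1 - ‖z‖ ^ 2) * μ z * ‖deriv f z‖ ≤ K * C) ∧
      (∀ f : ℂ → ℂ, DifferentiableOn ℂ f (Metric.ball (0:ℂ) 1) → ∀ C : ℝ,
        (‖f 0‖ ≤ C ∧
          ∀ z ∈ Metric.ball (0:ℂ) 1,
            (1 - ‖z‖ ^ 2) * μ z * ‖deriv f z‖ ≤ C) →
        ∀ z ∈ Metric.ball (0:ℂ) 1, μ z * ‖f z‖ ≤ K * C)) :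
    (∃ M : ℝ, ∀ f : ℂ → ℂ, DifferentiableOn ℂ f (Metric.ball (0:ℂ) 1) →
      ∀ C : ℝ, (∀ z ∈ Metric.ball (0:ℂ) 1, ν z * ‖f z‖ ≤ C) →
      ∀ z ∈ Metric.ball (0:ℂ) 1, μ z * ‖Sg g f z‖ ≤ M * C)
    ↔ (∃ M : ℝ, ∀ z ∈ Metric.ball (0:ℂ) 1, μ z / ν z * ‖g z‖ ≤ M) := by
  obtain ⟨Cν, hCν, hU⟩ := hU
  obtain ⟨K, -, hqn₁, hqn₂⟩ := hqn
  constructor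
  · rintro ⟨M, hM⟩
    have hS : HasWeightedDerivMulBound ν μ g (K * M) := fun f hf C hC a ha => by
      have h := hqn₁ (Sg g f) (differentiableOn_Sg hf hg) (M * C) (hM f hf C hC) a ha
      rwa [(hasDerivAt_Sg hf hg ha).deriv, ← mul_assoc] at h
    exact hS.exists_weighted_bound hν hνpos hμ.2.1 hU hCν
  · rintro ⟨M, hM⟩
    exact ⟨K * (Cν * M), fun f hf C hC z hz =>
      (weighted_norm_Sg_le hνpos hμ.2.1 hg hU hCν.le hqn₂ hM hf hC z hz).trans_eq (by ring)⟩
end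
end

section
/- Let ν and μ be positive weights and g analytic on 𝔻. If lim_{|z|→1⁻} |g(z)| μ(z)/ν̃(z) = 0, where ν̃ is the associated weight of ν, then S_g : B^∞_ν → B^∞_μ is compact; conversely compactness of S_g implies this vanishing condition. (Compactness may be expressed via the sequential criterion: every bounded sequence in B^∞_ν converging to 0 uniformly on compacts is mapped to a norm-null sequence in B^∞_μ.) -/
open Complex Metric Set Filter Real MeasureTheory

noncomputable section

def assocWeight (ν : ℂ → ℝ) (z : ℂ) : ℝ :=
  (sSup {a : ℝ | ∃ f : ℂ → ℂ, DifferentiableOn ℂ f (Metric.ball (0:ℂ) 1) ∧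
      (∀ w ∈ Metric.ball (0:ℂ) 1, ν w * ‖f w‖ ≤ 1) ∧ a = ‖f z‖})⁻¹

/-! Since `1/ν̃(z) = sup {|h(z)| : ‖h‖_{H^∞_ν} ≤ 1}`, the estimate `|f'(z)| ≤ ‖f‖_{B^∞_ν}/ν̃(z)`
controls `μ |f' g|` near the boundary, while on a compact disc `f_n' → 0` uniformly.

Conversely, if `|g| μ/ν̃ ≥ ε` at points `z_n` with `|z_n|^n ≥ 1/2`, take `h_n` in the unit ball
of `H^∞_ν` with `|h_n(z_n)| > 1/(2ν̃(z_n))`. The primitives `f_n` of `h_n(z) zⁿ` vanishing at `0`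
are bounded in `B^∞_ν` and tend to `0` uniformly on compacts, yet
`μ(z_n)|f_n'(z_n) g(z_n)| ≥ ε/4`. -/

/-- The sequential compactness criterion for `S_g : B^∞_ν → B^∞_μ`, where `(S_g f)' = f' g`. -/
def IntegrationOperatorSeqCompact (ν μ : ℂ → ℝ) (g : ℂ → ℂ) : Prop :=
  ∀ (f : ℕ → ℂ → ℂ) (W : ℝ),
    (∀ n, DifferentiableOn ℂ (f n) (ball (0:ℂ) 1)) →
    (∀ n, ‖f n 0‖ ≤ W ∧ ∀ z ∈ ball (0:ℂ) 1, ν z * ‖deriv (f n) z‖ ≤ W) →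
    (∀ K : Set ℂ, K ⊆ ball (0:ℂ) 1 → IsCompact K → TendstoUniformlyOn f 0 atTop K) →
    ∀ ε > (0:ℝ), ∃ N : ℕ, ∀ n ≥ N, ∀ z ∈ ball (0:ℂ) 1, μ z * (‖deriv (f n) z‖ * ‖g z‖) ≤ ε

def VanishesAtBoundary (φ : ℂ → ℝ) : Prop :=
  ∀ ε > (0:ℝ), ∃ r ∈ Ico (0:ℝ) 1, ∀ z ∈ ball (0:ℂ) 1, r < ‖z‖ → φ z < ε

namespace IsWeight

variable {ν : ℂ → ℝ}

lemma le_of_norm_le (hν : IsWeight ν) {z w : ℂ} (hwz : ‖w‖ ≤ ‖z‖) (hz : ‖z‖ < 1) :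
    ν z ≤ ν w := by
  rw [hν.2.2.1 z, hν.2.2.1 w]
  exact hν.2.2.2 _ _ (norm_nonneg w) hwz hz

lemma norm_le_inv_of_norm_le (hν : IsWeight ν) (hνpos : ∀ z ∈ ball (0:ℂ) 1, 0 < ν z)
    {f : ℂ → ℂ} (hf : ∀ w ∈ ball (0:ℂ) 1, ν w * ‖f w‖ ≤ 1) {ρ : ℝ} (hρ : ρ < 1) {z : ℂ}
    (hz : ‖z‖ ≤ ρ) : ‖f z‖ ≤ (ν ρ)⁻¹ := by
  have hρ_norm : ‖(ρ : ℂ)‖ = ρ := Complex.norm_of_nonneg ((norm_nonneg z).trans hz)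
  have hρ_mem : (ρ : ℂ) ∈ ball (0:ℂ) 1 := mem_ball_zero_iff.mpr (by rwa [hρ_norm])
  have hz_mem : z ∈ ball (0:ℂ) 1 := mem_ball_zero_iff.mpr (hz.trans_lt hρ)
  have hνz : ν ρ ≤ ν z := hν.le_of_norm_le (by rwa [hρ_norm]) (mem_ball_zero_iff.mp hρ_mem)
  rw [← mul_one (ν ρ)⁻¹, le_inv_mul_iff₀ (hνpos _ hρ_mem)]
  exact (mul_le_mul_of_nonneg_right hνz (norm_nonneg _)).trans (hf z hz_mem)

end IsWeight

section AssocWeight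

variable {ν : ℂ → ℝ} {z : ℂ}

lemma norm_le_mul_inv_assocWeight (hνpos : ∀ z ∈ ball (0:ℂ) 1, 0 < ν z) {f : ℂ → ℂ}
    (hf : DifferentiableOn ℂ f (ball (0:ℂ) 1)) {C : ℝ} (hC : 0 < C)
    (hfC : ∀ w ∈ ball (0:ℂ) 1, ν w * ‖f w‖ ≤ C) (hz : z ∈ ball (0:ℂ) 1) :
    ‖f z‖ ≤ C * (assocWeight ν z)⁻¹ := by
  rw [assocWeight, inv_inv, ← div_le_iff₀' hC]
  refine le_csSup ⟨(ν z)⁻¹, ?_⟩ ⟨fun w => f w / C, hf.div_const _, fun w hw => ?_, ?_⟩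
  · rintro _ ⟨h, -, hh, rfl⟩
    rw [← mul_one (ν z)⁻¹, le_inv_mul_iff₀ (hνpos z hz)]
    exact hh z hz
  · rw [norm_div, Complex.norm_real, Real.norm_of_nonneg hC.le, mul_div_assoc', div_le_one hC]
    exact hfC w hw
  · rw [norm_div, Complex.norm_real, Real.norm_of_nonneg hC.le]

lemma exists_lt_norm_of_lt_inv_assocWeight {c : ℝ} (hc : c < (assocWeight ν z)⁻¹) :
    ∃ h : ℂ → ℂ, DifferentiableOn ℂ h (ball (0:ℂ) 1) ∧
      (∀ w ∈ ball (0:ℂ) 1, ν w * ‖h w‖ ≤ 1) ∧ c < ‖h z‖ := by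
  rw [assocWeight, inv_inv] at hc
  have hzero : (0:ℝ) ∈ {a : ℝ | ∃ f : ℂ → ℂ, DifferentiableOn ℂ f (ball (0:ℂ) 1) ∧
      (∀ w ∈ ball (0:ℂ) 1, ν w * ‖f w‖ ≤ 1) ∧ a = ‖f z‖} :=
    ⟨0, differentiableOn_const 0, fun w _ => by simp, by simp⟩
  obtain ⟨_, ⟨h, hh, hbd, rfl⟩, hlt⟩ := exists_lt_of_lt_csSup ⟨0, hzero⟩ hc
  exact ⟨h, hh, hbd, hlt⟩

end AssocWeight

lemma tendstoUniformlyOn_closedBall_of_norm_deriv_le_mul_pow {F F' : ℕ → ℂ → ℂ} {ρ C : ℝ}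
    (hρ0 : 0 ≤ ρ) (hρ1 : ρ < 1) (hF0 : ∀ n, F n 0 = 0)
    (hF : ∀ n, ∀ z ∈ closedBall (0:ℂ) ρ, HasDerivAt (F n) (F' n z) z)
    (hF' : ∀ n, ∀ z ∈ closedBall (0:ℂ) ρ, ‖F' n z‖ ≤ C * ρ ^ n) :
    TendstoUniformlyOn F 0 atTop (closedBall (0:ℂ) ρ) := by
  have hbound : ∀ n, ∀ z ∈ closedBall (0:ℂ) ρ, ‖F n z‖ ≤ C * ρ ^ n * ρ := by
    intro n z hz
    have hmvt := (convex_closedBall (0:ℂ) ρ).norm_image_sub_le_of_norm_hasDerivWithin_le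
      (fun w hw => (hF n w hw).hasDerivWithinAt) (hF' n) (mem_closedBall_self hρ0) hz
    rw [hF0 n, sub_zero, sub_zero] at hmvt
    exact hmvt.trans (mul_le_mul_of_nonneg_left (mem_closedBall_zero_iff.mp hz)
      ((norm_nonneg _).trans (hF' n 0 (mem_closedBall_self hρ0))))
  have hlim : Tendsto (fun n : ℕ => C * ρ ^ n * ρ) atTop (nhds 0) := by
    simpa using ((tendsto_pow_atTop_nhds_zero_of_lt_one hρ0 hρ1).const_mul C).mul_const ρ
  rw [Metric.tendstoUniformlyOn_iff]
  intro δ hδ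
  filter_upwards [hlim.eventually_lt_const hδ] with n hn z hz
  simpa using (hbound n z hz).trans_lt hn

lemma IsWeight.tendstoUniformlyOn_of_hasDerivAt_mul_pow {ν : ℂ → ℝ} (hν : IsWeight ν)
    (hνpos : ∀ z ∈ ball (0:ℂ) 1, 0 < ν z) {h F : ℕ → ℂ → ℂ}
    (hh : ∀ n, ∀ w ∈ ball (0:ℂ) 1, ν w * ‖h n w‖ ≤ 1) (hF0 : ∀ n, F n 0 = 0)
    (hF : ∀ n, ∀ z ∈ ball (0:ℂ) 1, HasDerivAt (F n) (h n z * z ^ n) z)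
    {K : Set ℂ} (hK : K ⊆ ball (0:ℂ) 1) (hKc : IsCompact K) :
    TendstoUniformlyOn F 0 atTop K := by
  obtain ⟨ρ, ⟨hρ0, hρ1⟩, hKρ⟩ := exists_pos_lt_subset_ball one_pos hKc.isClosed hK
  have hsub : closedBall (0:ℂ) ρ ⊆ ball 0 1 := closedBall_subset_ball hρ1
  refine (tendstoUniformlyOn_closedBall_of_norm_deriv_le_mul_pow hρ0.le hρ1 hF0
    (fun n z hz => hF n z (hsub hz)) (C := (ν ρ)⁻¹) fun n z hz => ?_).mono
    (hKρ.trans ball_subset_closedBall)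
  have hzρ := mem_closedBall_zero_iff.mp hz
  have hhz := hν.norm_le_inv_of_norm_le hνpos (hh n) hρ1 hzρ
  rw [norm_mul, norm_pow]
  exact mul_le_mul hhz (pow_le_pow_left₀ (norm_nonneg z) hzρ n) (by positivity)
    ((norm_nonneg _).trans hhz)

lemma half_le_pow_of_rpow_lt {x : ℝ} (n : ℕ) (hx : (1/2 : ℝ) ^ ((n + 1 : ℕ) : ℝ)⁻¹ < x)
    (hx1 : x ≤ 1) : 1/2 ≤ x ^ n := by
  have hx0 : 0 ≤ x := (Real.rpow_nonneg (by norm_num) _).trans hx.le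
  calc (1/2 : ℝ) = ((1/2 : ℝ) ^ ((n + 1 : ℕ) : ℝ)⁻¹) ^ (n + 1) :=
        (Real.rpow_inv_natCast_pow (by norm_num) n.succ_ne_zero).symm
    _ ≤ x ^ (n + 1) := pow_le_pow_left₀ (Real.rpow_nonneg (by norm_num) _) hx.le _
    _ ≤ x ^ n := pow_le_pow_of_le_one hx0 hx1 n.le_succ

theorem vanishesAtBoundary_of_integrationOperatorSeqCompact {ν μ : ℂ → ℝ} {g : ℂ → ℂ}
    (hν : IsWeight ν) (hνpos : ∀ z ∈ ball (0:ℂ) 1, 0 < ν z)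
    (hμ : ∀ z ∈ ball (0:ℂ) 1, 0 ≤ μ z) (hS : IntegrationOperatorSeqCompact ν μ g) :
    VanishesAtBoundary fun z => ‖g z‖ * μ z / assocWeight ν z := by
  intro ε hε
  by_contra! hbad
  have hradius : ∀ n : ℕ, (1/2 : ℝ) ^ ((n + 1 : ℕ) : ℝ)⁻¹ ∈ Ico (0:ℝ) 1 := fun n =>
    ⟨by positivity, Real.rpow_lt_one (by norm_num) (by norm_num) (by positivity)⟩
  choose z hz hzr hzε using fun n => hbad _ (hradius n)
  have hgμ : ∀ n, 0 ≤ ‖g (z n)‖ * μ (z n) := fun n => mul_nonneg (norm_nonneg _) (hμ _ (hz n))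
  have hs : ∀ n, 0 < (assocWeight ν (z n))⁻¹ := by
    intro n
    have := hzε n
    rw [div_eq_mul_inv] at this
    by_contra! hle
    linarith [mul_nonpos_of_nonneg_of_nonpos (hgμ n) hle]
  choose h hh hhν hhz using fun n => exists_lt_norm_of_lt_inv_assocWeight (half_lt_self (hs n))
  choose F hF0 hF using fun n =>
    ((hh n).mul (differentiable_pow n).differentiableOn).isExactOn_ball.with_val_at 0 0
  have hderiv : ∀ n, ∀ w ∈ ball (0:ℂ) 1, deriv (F n) w = h n w * w ^ n :=
    fun n w hw => (hF n w hw).deriv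
  have hFbd : ∀ n, ‖F n 0‖ ≤ 1 ∧ ∀ w ∈ ball (0:ℂ) 1, ν w * ‖deriv (F n) w‖ ≤ 1 := by
    refine fun n => ⟨by simp [hF0 n], fun w hw => ?_⟩
    rw [hderiv n w hw, norm_mul, norm_pow, ← mul_assoc]
    exact (mul_le_mul_of_nonneg_right (hhν n w hw) (by positivity)).trans
      (by simpa using pow_le_one₀ (norm_nonneg w) (mem_ball_zero_iff.mp hw).le)
  obtain ⟨N, hN⟩ := hS F 1 (fun n w hw => (hF n w hw).differentiableAt.differentiableWithinAt)
    hFbd (fun K hK hKc => hν.tendstoUniformlyOn_of_hasDerivAt_mul_pow hνpos hhν hF0 hF hK hKc)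
    (ε / 8) (by positivity)
  have hlow : (assocWeight ν (z N))⁻¹ / 2 * (1/2) ≤ ‖deriv (F N) (z N)‖ := by
    rw [hderiv N _ (hz N), norm_mul, norm_pow]
    exact mul_le_mul (hhz N).le (half_le_pow_of_rpow_lt N (hzr N) (mem_ball_zero_iff.mp (hz N)).le)
      (by norm_num) (norm_nonneg _)
  have hε' := hzε N
  rw [div_eq_mul_inv] at hε'
  have := mul_le_mul_of_nonneg_left hlow (hgμ N)
  linarith [hN N le_rfl (z N) (hz N)]

lemma TendstoUniformlyOn.eventually_mul_norm_le {ι α E : Type*} [SeminormedAddCommGroup E]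
    {l : Filter ι} {F : ι → α → E} {K : Set α} {ψ : α → ℝ} {B ε : ℝ}
    (hF : TendstoUniformlyOn F 0 l K) (hψ : ∀ z ∈ K, ‖ψ z‖ ≤ B) (hε : 0 < ε) :
    ∀ᶠ n in l, ∀ z ∈ K, ψ z * ‖F n z‖ ≤ ε := by
  have hB : 0 < |B| + 1 := by positivity
  filter_upwards [Metric.tendstoUniformlyOn_iff.mp hF (ε / (|B| + 1)) (by positivity)]
    with n hn z hz
  have hFz : ‖F n z‖ ≤ ε / (|B| + 1) := by simpa using (hn z hz).le
  calc ψ z * ‖F n z‖ ≤ (|B| + 1) * (ε / (|B| + 1)) :=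
        mul_le_mul (by linarith [Real.le_norm_self (ψ z), hψ z hz, le_abs_self B]) hFz
          (norm_nonneg _) hB.le
    _ = ε := mul_div_cancel₀ _ hB.ne'

lemma tendstoUniformlyOn_deriv_of_forall_isCompact {ι : Type*} {l : Filter ι} {U K : Set ℂ}
    (hU : IsOpen U) {f : ι → ℂ → ℂ} (hf : ∀ n, DifferentiableOn ℂ (f n) U)
    (hlim : ∀ K ⊆ U, IsCompact K → TendstoUniformlyOn f 0 l K) (hK : K ⊆ U) (hKc : IsCompact K) :
    TendstoUniformlyOn (deriv ∘ f) 0 l K := by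
  have := ((tendstoLocallyUniformlyOn_iff_forall_isCompact hU).mpr hlim).deriv
    (Eventually.of_forall hf) hU
  simpa using (tendstoLocallyUniformlyOn_iff_forall_isCompact hU).mp this K hK hKc

theorem integrationOperatorSeqCompact_of_vanishesAtBoundary {ν μ : ℂ → ℝ} {g : ℂ → ℂ}
    (hνpos : ∀ z ∈ ball (0:ℂ) 1, 0 < ν z) (hμ : IsWeight μ)
    (hg : DifferentiableOn ℂ g (ball (0:ℂ) 1))
    (hvan : VanishesAtBoundary fun z => ‖g z‖ * μ z / assocWeight ν z) :
    IntegrationOperatorSeqCompact ν μ g := by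
  intro f W hf hbd hlim ε hε
  have hW : 0 < W + 1 := by linarith [(norm_nonneg _).trans (hbd 0).1]
  obtain ⟨r, ⟨-, hr1⟩, hr⟩ := hvan (ε / (W + 1)) (by positivity)
  have hsub : closedBall (0:ℂ) r ⊆ ball 0 1 := closedBall_subset_ball hr1
  obtain ⟨B, hB⟩ := (isCompact_closedBall (0:ℂ) r).exists_bound_of_continuousOn
    ((hμ.1.mul hg.continuousOn.norm).mono hsub)
  obtain ⟨N, hN⟩ := eventually_atTop.mp
    ((tendstoUniformlyOn_deriv_of_forall_isCompact isOpen_ball hf hlim hsub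
      (isCompact_closedBall _ _)).eventually_mul_norm_le hB hε)
  refine ⟨N, fun n hn z hz => ?_⟩
  rcases le_or_gt ‖z‖ r with hzr | hzr
  · calc μ z * (‖deriv (f n) z‖ * ‖g z‖)
        = (μ * fun x => ‖g x‖) z * ‖(deriv ∘ f) n z‖ := by
          simp only [Pi.mul_apply, Function.comp_apply]; ring
      _ ≤ ε := hN n hn z (mem_closedBall_zero_iff.mpr hzr)
  · have hderiv : ‖deriv (f n) z‖ ≤ (W + 1) * (assocWeight ν z)⁻¹ :=
      norm_le_mul_inv_assocWeight hνpos ((hf n).deriv isOpen_ball) hW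
        (fun w hw => ((hbd n).2 w hw).trans (by linarith)) hz
    have hsmall : ‖g z‖ * μ z / assocWeight ν z < ε / (W + 1) := hr z hz hzr
    rw [lt_div_iff₀ hW, div_eq_mul_inv] at hsmall
    calc μ z * (‖deriv (f n) z‖ * ‖g z‖)
        ≤ μ z * ((W + 1) * (assocWeight ν z)⁻¹ * ‖g z‖) := by
          gcongr
          exact hμ.2.1 z hz
      _ = ‖g z‖ * μ z * (assocWeight ν z)⁻¹ * (W + 1) := by ring
      _ ≤ ε := hsmall.le

theorem stmt11_general (ν μ : ℂ → ℝ) (g : ℂ → ℂ)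
    (hν : IsWeight ν) (hμ : IsWeight μ)
    (hνpos : ∀ z ∈ Metric.ball (0:ℂ) 1, 0 < ν z)
    (hg : DifferentiableOn ℂ g (Metric.ball (0:ℂ) 1)) :
    (∀ (f : ℕ → ℂ → ℂ) (W : ℝ),
      (∀ n, DifferentiableOn ℂ (f n) (Metric.ball (0:ℂ) 1)) →
      (∀ n, ‖f n 0‖ ≤ W ∧
        ∀ z ∈ Metric.ball (0:ℂ) 1, ν z * ‖deriv (f n) z‖ ≤ W) →
      (∀ K : Set ℂ, K ⊆ Metric.ball (0:ℂ) 1 → IsCompact K →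
        TendstoUniformlyOn f 0 Filter.atTop K) →
      ∀ ε > (0:ℝ), ∃ N : ℕ, ∀ n ≥ N, ∀ z ∈ Metric.ball (0:ℂ) 1,
        μ z * (‖deriv (f n) z‖ * ‖g z‖) ≤ ε)
    ↔ (∀ ε > (0:ℝ), ∃ r ∈ Set.Ico (0:ℝ) 1, ∀ z ∈ Metric.ball (0:ℂ) 1,
        r < ‖z‖ → ‖g z‖ * μ z / assocWeight ν z < ε) :=
  ⟨vanishesAtBoundary_of_integrationOperatorSeqCompact hν hνpos hμ.2.1,
    integrationOperatorSeqCompact_of_vanishesAtBoundary hνpos hμ hg⟩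

/-- `S_g : B^∞_ν → B^∞_μ` is compact (sequential criterion, through
`(S_g f)' = f'·g` and `S_g f (0) = 0`) iff `lim_{|z|→1⁻} |g(z)| μ(z)/ν̃(z) = 0`. -/
theorem stmt11 (ν μ : ℂ → ℝ) (g : ℂ → ℂ)
    (hν : IsWeight ν) (hμ : IsWeight μ)
    (hνpos : ∀ z ∈ Metric.ball (0:ℂ) 1, 0 < ν z)
    (hμpos : ∀ z ∈ Metric.ball (0:ℂ) 1, 0 < μ z)
    (hg : DifferentiableOn ℂ g (Metric.ball (0:ℂ) 1)) :
    (∀ (f : ℕ → ℂ → ℂ) (W : ℝ),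
      (∀ n, DifferentiableOn ℂ (f n) (Metric.ball (0:ℂ) 1)) →
      (∀ n, ‖f n 0‖ ≤ W ∧
        ∀ z ∈ Metric.ball (0:ℂ) 1, ν z * ‖deriv (f n) z‖ ≤ W) →
      (∀ K : Set ℂ, K ⊆ Metric.ball (0:ℂ) 1 → IsCompact K →
        TendstoUniformlyOn f 0 Filter.atTop K) →
      ∀ ε > (0:ℝ), ∃ N : ℕ, ∀ n ≥ N, ∀ z ∈ Metric.ball (0:ℂ) 1,
        μ z * (‖deriv (f n) z‖ * ‖g z‖) ≤ ε)
    ↔ (∀ ε > (0:ℝ), ∃ r ∈ Set.Ico (0:ℝ) 1, ∀ z ∈ Metric.ball (0:ℂ) 1,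
        r < ‖z‖ → ‖g z‖ * μ z / assocWeight ν z < ε) :=
  stmt11_general ν μ g hν hμ hνpos hg
end
end
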